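/- The ℚ-polynomial de Rham algebra of the standard n-simplex, A*_p(n), generated in degree 0 by t₀,…,t_n and degree 1 by dt₀,…,dt_n subject to t₀+⋯+t_n = 1 and dt₀+⋯+dt_n = 0, has H⁰(A*_p(n)) = ℚ and Hᵏ(A*_p(n)) = 0 for k > 0. -/

import Mathlib

open MvPolynomial

/-- The degree-`k` part of the `ℚ`-polynomial de Rham algebra `A*_p(n)` of
the standard `n`-simplex, in the model `ℚ[t₁,…,t_n] ⊗ ⋀(dt₁,…,dt_n)`:
a `k`-form is a family of polynomial coefficients indexed by the
`k`-element subsets `S` of `{1,…,n}` (the coefficient of `dt_S`). -/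
def SimplexForm (n k : ℕ) : Type :=
  {S : Finset (Fin n) // S.card = k} → MvPolynomial (Fin n) ℚ

/-- The exterior derivative of the polynomial de Rham algebra of the
simplex: `d(f dt_S) = Σᵢ ±(∂f/∂tᵢ) dtᵢ ∧ dt_S`, determined by `d tᵢ = dtᵢ`
and the Leibniz rule. -/
noncomputable def simplexFormD (n k : ℕ) (ω : SimplexForm n k) : SimplexForm n (k + 1) :=
  fun S => ∑ i ∈ S.1.attach,
    ((-1 : ℚ) ^ (((S.1.erase i.1).filter fun j => j < i.1).card)) •
      MvPolynomial.pderiv i.1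
        (ω ⟨S.1.erase i.1, by
          simp [Finset.card_erase_of_mem i.2, S.2]⟩)

namespace SimplexProof
variable {n : ℕ}



/-- scale the degree-`p` homogeneous part by `1/(p+m)` -/
noncomputable def sig (n m : ℕ) (f : MvPolynomial (Fin n) ℚ) : MvPolynomial (Fin n) ℚ :=
  ∑ u ∈ f.support, monomial u ((((∑ i, u i) + m : ℕ) : ℚ)⁻¹ * coeff u f)

lemma coeff_sig (m : ℕ) (f : MvPolynomial (Fin n) ℚ) (u : Fin n →₀ ℕ) :
    coeff u (sig n m f) = (((∑ i, u i) + m : ℕ) : ℚ)⁻¹ * coeff u f := by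
  rw [sig, coeff_sum, Finset.sum_eq_single u]
  · rw [coeff_monomial, if_pos rfl]
  · intro b _ hb
    rw [coeff_monomial, if_neg hb]
  · intro hu
    rw [coeff_monomial, if_pos rfl, MvPolynomial.notMem_support_iff.mp hu, mul_zero]

lemma sig_add (m : ℕ) (f g : MvPolynomial (Fin n) ℚ) :
    sig n m (f + g) = sig n m f + sig n m g := by
  apply MvPolynomial.ext; intro u
  simp [coeff_sig, coeff_add, mul_add]

lemma sig_smul (m : ℕ) (c : ℚ) (f : MvPolynomial (Fin n) ℚ) :
    sig n m (c • f) = c • sig n m f := by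
  apply MvPolynomial.ext; intro u
  simp [coeff_sig, coeff_smul]; ring

lemma sig_zero (m : ℕ) : sig n m (0 : MvPolynomial (Fin n) ℚ) = 0 := by
  apply MvPolynomial.ext; intro u; simp [coeff_sig]

lemma sig_monomial (m : ℕ) (u : Fin n →₀ ℕ) (a : ℚ) :
    sig n m (monomial u a) = monomial u ((((∑ i, u i) + m : ℕ) : ℚ)⁻¹ * a) := by
  apply MvPolynomial.ext; intro v
  rw [coeff_sig, coeff_monomial, coeff_monomial]
  by_cases h : u = v
  · subst h; simp
  · simp [h]

lemma sum_sub_single (i : Fin n) (u : Fin n →₀ ℕ) (h : 0 < u i) :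
    (∑ j, ((u - Finsupp.single i 1 : Fin n →₀ ℕ)) j) + 1 = ∑ j, u j := by
  have hle : Finsupp.single i 1 ≤ u := Finsupp.single_le_iff.mpr h
  have hu : (u - Finsupp.single i 1 : Fin n →₀ ℕ) + Finsupp.single i 1 = u :=
    tsub_add_cancel_of_le hle
  calc (∑ j, ((u - Finsupp.single i 1 : Fin n →₀ ℕ)) j) + 1
      = ∑ j, (((u - Finsupp.single i 1 : Fin n →₀ ℕ) + Finsupp.single i 1 : Fin n →₀ ℕ)) j := by
        simp [Finsupp.add_apply, Finset.sum_add_distrib, Finsupp.single_apply]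
    _ = ∑ j, u j := by rw [hu]

lemma pderiv_sig (m : ℕ) (i : Fin n) (f : MvPolynomial (Fin n) ℚ) :
    pderiv i (sig n (m+1) f) = sig n (m+2) (pderiv i f) := by
  induction f using MvPolynomial.induction_on' with
  | add p q hp hq => rw [sig_add, map_add, map_add, sig_add, hp, hq]
  | monomial u a =>
    rw [sig_monomial, pderiv_monomial, pderiv_monomial, sig_monomial]
    rcases Nat.eq_zero_or_pos (u i) with h | h
    · simp [h]
    · have key : ((∑ j, ((u - Finsupp.single i 1 : Fin n →₀ ℕ)) j) + (m+2)) 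
          = (∑ j, u j) + (m+1) := by
        have := sum_sub_single i u h
        omega
      rw [key]
      congr 1
      ring



lemma X_mul_pderiv_monomial (i : Fin n) (u : Fin n →₀ ℕ) (a : ℚ) :
    X i * pderiv i (monomial u a) = monomial u (a * u i) := by
  rw [pderiv_monomial]
  rcases Nat.eq_zero_or_pos (u i) with h | h
  · simp [h]
  · rw [X, monomial_mul, one_mul]
    rw [show (Finsupp.single i 1 + (u - Finsupp.single i 1) : Fin n →₀ ℕ) = u from by
      rw [add_comm]; exact tsub_add_cancel_of_le (Finsupp.single_le_iff.mpr h)]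

lemma euler_monomial (u : Fin n →₀ ℕ) (a : ℚ) :
    ∑ i, X i * pderiv i (monomial u a) = ((∑ i, u i : ℕ) : ℚ) • monomial u a := by
  simp only [X_mul_pderiv_monomial]
  rw [← map_sum (monomial u) _ Finset.univ, ← Finset.mul_sum, MvPolynomial.smul_monomial]
  congr 1
  rw [Nat.cast_sum, smul_eq_mul]
  ring

lemma euler_sig (m : ℕ) (f : MvPolynomial (Fin n) ℚ) :
    (∑ i, X i * pderiv i (sig n (m+1) f)) + ((m+1 : ℕ) : ℚ) • sig n (m+1) f = f := by
  induction f using MvPolynomial.induction_on' with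
  | add p q hp hq =>
    rw [sig_add, smul_add]
    calc (∑ i, X i * pderiv i (sig n (m+1) p + sig n (m+1) q))
          + (((m+1 : ℕ) : ℚ) • sig n (m+1) p + ((m+1 : ℕ) : ℚ) • sig n (m+1) q)
        = ((∑ i, X i * pderiv i (sig n (m+1) p)) + ((m+1 : ℕ) : ℚ) • sig n (m+1) p)
          + ((∑ i, X i * pderiv i (sig n (m+1) q)) + ((m+1 : ℕ) : ℚ) • sig n (m+1) q) := by
          simp only [map_add, mul_add, Finset.sum_add_distrib]; ring
      _ = p + q := by rw [hp, hq]
  | monomial u a =>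
    rw [sig_monomial, euler_monomial, MvPolynomial.smul_monomial, MvPolynomial.smul_monomial,
      ← map_add (monomial u)]
    have hp0 : (0:ℚ) ≤ ((∑ i, u i : ℕ) : ℚ) := Nat.cast_nonneg _
    have hne : (((∑ i, u i) + (m+1) : ℕ) : ℚ) ≠ 0 := by
      push_cast
      positivity
    congr 1
    rw [smul_eq_mul, smul_eq_mul]
    push_cast at hne ⊢
    field_simp

lemma eq_C_of_pderiv_eq_zero (f : MvPolynomial (Fin n) ℚ)
    (h : ∀ i, pderiv i f = 0) : f = C (coeff 0 f) := by
  set g : MvPolynomial (Fin n) ℚ := f - C (coeff 0 f) with hg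
  have hgp : ∀ i, pderiv i g = 0 := by
    intro i; rw [hg, map_sub, h i, pderiv_C, sub_zero]
  have hsig : sig n 1 g = g := by
    have := euler_sig 0 g
    simp only [hgp, zero_add] at this
    have hps : ∀ i : Fin n, pderiv i (sig n 1 g) = 0 := by
      intro i
      rw [show (1:ℕ) = 0 + 1 from rfl, pderiv_sig, hgp, sig_zero]
    simp only [hps, mul_zero, Finset.sum_const_zero, zero_add] at this
    simpa using this
  have hzero : g = 0 := by
    apply MvPolynomial.ext; intro u
    have := congrArg (coeff u) hsig
    rw [coeff_sig] at this
    rcases Nat.eq_zero_or_pos (∑ i, u i) with hd | hd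
    · have hu : u = 0 := by
        ext i
        exact (Finset.sum_eq_zero_iff.mp hd) i (Finset.mem_univ i)
      subst hu
      rw [hg]
      simp
    · set c : ℚ := (((∑ i, u i) + 1 : ℕ) : ℚ) with hc
      have hc1 : c ≠ 1 := by
        rw [hc]
        intro h
        have : ((∑ i, u i) + 1 : ℕ) = 1 := by exact_mod_cast h
        omega
      have hcne : c ≠ 0 := by
        rw [hc]
        exact Nat.cast_ne_zero.mpr (Nat.succ_ne_zero _)
      have h2 : coeff u g = c * coeff u g := by
        have h5 := congrArg (fun x => c * x) this
        simpa [← mul_assoc, mul_inv_cancel₀ hcne] using h5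
      have h3 : (c - 1) * coeff u g = 0 := by linear_combination -h2
      rcases mul_eq_zero.mp h3 with h4 | h4
      · exact absurd (by linarith : c = 1) hc1
      · simp [h4]
  rw [← sub_eq_zero]
  exact hzero


/-- sign of `i` relative to `T` -/
noncomputable def sgn (i : Fin n) (T : Finset (Fin n)) : ℚ :=
  (-1 : ℚ) ^ ((T.filter fun j => j < i).card)

noncomputable def Dt (f : Finset (Fin n) → MvPolynomial (Fin n) ℚ) (S : Finset (Fin n)) :
    MvPolynomial (Fin n) ℚ :=
  ∑ i ∈ S, sgn i (S.erase i) • pderiv i (f (S.erase i))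

noncomputable def It (f : Finset (Fin n) → MvPolynomial (Fin n) ℚ) (T : Finset (Fin n)) :
    MvPolynomial (Fin n) ℚ :=
  ∑ j ∈ Tᶜ, sgn j T • (X j * f (insert j T))

lemma sgn_mul_self (i : Fin n) (T : Finset (Fin n)) : sgn i T * sgn i T = 1 := by
  rw [sgn, ← pow_add]
  exact Even.neg_one_pow ⟨_, rfl⟩

lemma sgn_insert (i j : Fin n) (T : Finset (Fin n)) (hj : j ∉ T) :
    sgn i (insert j T) = (if j < i then (-1:ℚ) else 1) * sgn i T := by
  rw [sgn, sgn, Finset.filter_insert]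
  split
  · rw [Finset.card_insert_of_notMem (fun hmem => hj (Finset.mem_filter.mp hmem).1)]
    rw [pow_succ]
    ring
  · rw [one_mul]

lemma sgn_cancel {S : Finset (Fin n)} {i j : Fin n} (hi : i ∈ S) (hj : j ∉ S) :
    sgn i (S.erase i) * sgn j (S.erase i)
      + sgn j S * sgn i (insert j (S.erase i)) = 0 := by
  have hij : i ≠ j := fun h => hj (h ▸ hi)
  have hiT : i ∉ S.erase i := Finset.notMem_erase i S
  have hjT : j ∉ S.erase i := fun h => hj (Finset.mem_of_mem_erase h)
  have hS : S = insert i (S.erase i) := (Finset.insert_erase hi).symm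
  have h1 : sgn j S = (if i < j then (-1:ℚ) else 1) * sgn j (S.erase i) := by
    conv_lhs => rw [hS]
    exact sgn_insert j i _ hiT
  have h2 : sgn i (insert j (S.erase i)) = (if j < i then (-1:ℚ) else 1) * sgn i (S.erase i) :=
    sgn_insert i j _ hjT
  rw [h1, h2]
  rcases lt_or_gt_of_ne hij with h | h
  · rw [if_pos h, if_neg (not_lt.mpr h.le)]
    ring
  · rw [if_neg (not_lt.mpr h.le), if_pos h]
    ring

lemma master (f : Finset (Fin n) → MvPolynomial (Fin n) ℚ) (S : Finset (Fin n)) :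
    Dt (It f) S + It (Dt f) S
      = S.card • f S + ∑ i, X i * pderiv i (f S) := by
  have hD : Dt (It f) S
      = (∑ i ∈ S, (f S + X i * pderiv i (f S)))
        + ∑ i ∈ S, ∑ j ∈ Sᶜ, (sgn i (S.erase i) * sgn j (S.erase i)) •
            (X j * pderiv i (f (insert j (S.erase i)))) := by
    rw [Dt]
    rw [← Finset.sum_add_distrib]
    refine Finset.sum_congr rfl fun i hi => ?_
    rw [It, map_sum]
    rw [Finset.smul_sum]
    have hcompl : (S.erase i)ᶜ = insert i Sᶜ := by
      rw [Finset.compl_erase]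
    rw [hcompl, Finset.sum_insert (by simpa using hi : i ∉ Sᶜ)]
    congr 1
    · -- diagonal term
      rw [Derivation.map_smul, smul_smul, sgn_mul_self, one_smul, Finset.insert_erase hi]
      rw [pderiv_mul, pderiv_X_self, one_mul]
    · refine Finset.sum_congr rfl fun j hj => ?_
      have hij : i ≠ j := fun h => (by simpa using hj : j ∉ S) (h ▸ hi)
      rw [Derivation.map_smul, smul_smul]
      congr 1
      rw [pderiv_mul, pderiv_X, Pi.single_apply, if_neg (Ne.symm hij), zero_mul, zero_add]
  have hI : It (Dt f) S
      = (∑ j ∈ Sᶜ, X j * pderiv j (f S))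
        + ∑ j ∈ Sᶜ, ∑ i ∈ S, (sgn j S * sgn i (insert j (S.erase i))) •
            (X j * pderiv i (f (insert j (S.erase i)))) := by
    rw [It]
    rw [← Finset.sum_add_distrib]
    refine Finset.sum_congr rfl fun j hj => ?_
    have hjS : j ∉ S := by simpa using hj
    rw [Dt, Finset.sum_insert hjS]
    rw [Finset.erase_insert hjS]
    rw [mul_add, smul_add]
    congr 1
    · rw [mul_smul_comm, smul_smul, sgn_mul_self, one_smul]
    · rw [Finset.mul_sum, Finset.smul_sum]
      refine Finset.sum_congr rfl fun i hi => ?_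
      have hij : i ≠ j := fun h => hjS (h ▸ hi)
      rw [Finset.erase_insert_of_ne hij.symm]
      rw [mul_smul_comm, smul_smul]
  rw [hD, hI]
  have hcross : (∑ i ∈ S, ∑ j ∈ Sᶜ, (sgn i (S.erase i) * sgn j (S.erase i)) •
            (X j * pderiv i (f (insert j (S.erase i)))))
        + (∑ j ∈ Sᶜ, ∑ i ∈ S, (sgn j S * sgn i (insert j (S.erase i))) •
            (X j * pderiv i (f (insert j (S.erase i))))) = 0 := by
    rw [Finset.sum_comm (s := Sᶜ)]
    rw [← Finset.sum_add_distrib]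
    refine Finset.sum_eq_zero fun i hi => ?_
    rw [← Finset.sum_add_distrib]
    refine Finset.sum_eq_zero fun j hj => ?_
    rw [← add_smul, sgn_cancel hi (by simpa using hj), zero_smul]
  have hdiag : ∑ i ∈ S, (f S + X i * pderiv i (f S))
      = S.card • f S + ∑ i ∈ S, X i * pderiv i (f S) := by
    rw [Finset.sum_add_distrib, Finset.sum_const]
  calc (∑ i ∈ S, (f S + X i * pderiv i (f S)))
        + (∑ i ∈ S, ∑ j ∈ Sᶜ, (sgn i (S.erase i) * sgn j (S.erase i)) •
            (X j * pderiv i (f (insert j (S.erase i)))))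
        + ((∑ j ∈ Sᶜ, X j * pderiv j (f S))
        + ∑ j ∈ Sᶜ, ∑ i ∈ S, (sgn j S * sgn i (insert j (S.erase i))) •
            (X j * pderiv i (f (insert j (S.erase i)))))
      = ((∑ i ∈ S, (f S + X i * pderiv i (f S))) + (∑ j ∈ Sᶜ, X j * pderiv j (f S)))
        + ((∑ i ∈ S, ∑ j ∈ Sᶜ, (sgn i (S.erase i) * sgn j (S.erase i)) •
            (X j * pderiv i (f (insert j (S.erase i)))))
          + ∑ j ∈ Sᶜ, ∑ i ∈ S, (sgn j S * sgn i (insert j (S.erase i))) •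
            (X j * pderiv i (f (insert j (S.erase i))))) := by ring
    _ = S.card • f S + ∑ i, X i * pderiv i (f S) := by
        rw [hcross, add_zero, hdiag, add_assoc]
        congr 1
        exact Finset.sum_add_sum_compl S _



end SimplexProof
namespace SimplexProof
variable {n : ℕ}

noncomputable def extF (k : ℕ) (ω : SimplexForm n k) :
    Finset (Fin n) → MvPolynomial (Fin n) ℚ :=
  fun T => if h : T.card = k then ω ⟨T, h⟩ else 0

lemma simplexFormD_eq_Dt (k : ℕ) (ω : SimplexForm n k)
    (S : {S : Finset (Fin n) // S.card = k+1}) :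
    simplexFormD n k ω S = Dt (extF k ω) S.1 := by
  rw [simplexFormD, Dt]
  calc ∑ i ∈ S.1.attach,
      ((-1 : ℚ) ^ (((S.1.erase i.1).filter fun j => j < i.1).card)) •
        pderiv i.1 (ω ⟨S.1.erase i.1, by
          simp [Finset.card_erase_of_mem i.2, S.2]⟩)
      = ∑ i ∈ S.1.attach,
        (fun x => sgn x (S.1.erase x) • pderiv x (extF k ω (S.1.erase x))) i.1 := by
        refine Finset.sum_congr rfl fun i _ => ?_
        have h : (S.1.erase i.1).card = k := by
          simp [Finset.card_erase_of_mem i.2, S.2]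
        simp only [sgn, extF, dif_pos h]
    _ = ∑ i ∈ S.1, sgn i (S.1.erase i) • pderiv i (extF k ω (S.1.erase i)) :=
        Finset.sum_attach _ (fun x => sgn x (S.1.erase x) • pderiv x (extF k ω (S.1.erase x)))

lemma ext_D (k : ℕ) (ω : SimplexForm n k) (T : Finset (Fin n)) (hT : T.card = k+1) :
    extF (k+1) (simplexFormD n k ω) T = Dt (extF k ω) T := by
  rw [extF, dif_pos hT]
  exact simplexFormD_eq_Dt k ω ⟨T, hT⟩

lemma sig_sum (m : ℕ) {α : Type*} (s : Finset α) (g : α → MvPolynomial (Fin n) ℚ) :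
    sig n m (∑ x ∈ s, g x) = ∑ x ∈ s, sig n m (g x) := by
  classical
  induction s using Finset.induction_on with
  | empty => simpa using sig_zero m
  | insert _ _ hx ih =>
    rw [Finset.sum_insert hx, Finset.sum_insert hx, sig_add, ih]

lemma Dt_sig (m : ℕ) (f : Finset (Fin n) → MvPolynomial (Fin n) ℚ) (S : Finset (Fin n)) :
    Dt (fun T => sig n (m+1) (f T)) S = sig n (m+2) (Dt f S) := by
  rw [Dt, Dt, sig_sum]
  refine Finset.sum_congr rfl fun i _ => ?_
  rw [pderiv_sig, sig_smul]

lemma ext_sig (k m : ℕ) (ω : SimplexForm n k) (T : Finset (Fin n)) :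
    extF k (fun S => sig n m (ω S) : SimplexForm n k) T
      = sig n m (extF k ω T) := by
  delta extF
  split
  · rfl
  · rw [sig_zero]

lemma subsingleton_zero (x : {S : Finset (Fin n) // S.card = 0}) :
    x = ⟨∅, Finset.card_empty⟩ :=
  Subtype.ext (Finset.card_eq_zero.mp x.2)

end SimplexProof


open SimplexProof in
/-- The `ℚ`-polynomial de Rham algebra `A*_p(n)` of the standard `n`-simplex
has `H⁰ = ℚ` (the kernel of `d` in degree `0` consists exactly of the
constants, embedded injectively) and `Hᵏ = 0` for `k > 0` (every closed form
of positive degree is exact). -/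
theorem simplexForm_cohomology (n : ℕ) :
    (Function.Injective fun c : ℚ => ((fun _ => C c) : SimplexForm n 0)) ∧
    (∀ ω : SimplexForm n 0,
      simplexFormD n 0 ω = (fun _ => (0 : MvPolynomial (Fin n) ℚ)) ↔
        ∃ c : ℚ, ω = fun _ => C c) ∧
    (∀ (k : ℕ) (ω : SimplexForm n (k + 1)),
      simplexFormD n (k + 1) ω = (fun _ => (0 : MvPolynomial (Fin n) ℚ)) →
        ∃ η : SimplexForm n k, simplexFormD n k η = ω) := by
  refine ⟨?_, ?_, ?_⟩
  · intro a b h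
    have := congrFun h ⟨∅, Finset.card_empty⟩
    exact MvPolynomial.C_injective _ _ this
  · intro ω
    constructor
    · intro hω
      set e : {S : Finset (Fin n) // S.card = 0} := ⟨∅, Finset.card_empty⟩ with he
      have key : ∀ i : Fin n, pderiv i (ω e) = 0 := by
        intro i
        have h1 := congrFun hω ⟨{i}, Finset.card_singleton i⟩
        rw [simplexFormD_eq_Dt 0 ω ⟨{i}, Finset.card_singleton i⟩] at h1
        rw [Dt, Finset.sum_singleton] at h1
        rw [Finset.erase_singleton] at h1
        have hsgn : sgn i (∅ : Finset (Fin n)) = 1 := by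
          simp [sgn]
        rw [hsgn, one_smul] at h1
        have hext : extF 0 ω (∅ : Finset (Fin n)) = ω e := by
          rw [extF, dif_pos Finset.card_empty]
        rw [hext] at h1
        exact h1
      refine ⟨coeff 0 (ω e), ?_⟩
      funext x
      rw [subsingleton_zero x]
      exact eq_C_of_pderiv_eq_zero (ω e) key
    · rintro ⟨c, rfl⟩
      funext S
      refine (simplexFormD_eq_Dt _ _ S).trans ?_
      show Dt _ _ = (0 : MvPolynomial (Fin n) ℚ)
      rw [Dt]
      refine Finset.sum_eq_zero fun i hi => ?_
      by_cases h : (S.1.erase i).card = 0 <;>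
        simp [extF, h, pderiv_C]
  · intro k ω hω
    -- scaled form
    set g : Finset (Fin n) → MvPolynomial (Fin n) ℚ :=
      extF (k+1) (fun S => sig n (k+1) (ω S) : SimplexForm n (k+1)) with hg
    refine ⟨fun T => It g T.1, ?_⟩
    funext S
    refine (simplexFormD_eq_Dt _ _ S).trans ?_
    have hDtIt : Dt (extF k (fun T => It g T.1 : SimplexForm n k)) S.1
        = Dt (It g) S.1 := by
      rw [Dt, Dt]
      refine Finset.sum_congr rfl fun i hi => ?_
      have h : (S.1.erase i).card = k := by
        simp [Finset.card_erase_of_mem hi, S.2]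
      delta extF; simp only [dif_pos h]
    rw [hDtIt]
    have hItDt : It (Dt g) S.1 = 0 := by
      rw [It]
      refine Finset.sum_eq_zero fun j hj => ?_
      have hjS : j ∉ S.1 := by simpa using hj
      have hcard : (insert j S.1).card = k + 2 := by
        rw [Finset.card_insert_of_notMem hjS, S.2]
      have hDg : Dt g (insert j S.1) = 0 := by
        have h1 : Dt g (insert j S.1)
            = sig n (k+2) (Dt (extF (k+1) ω) (insert j S.1)) := by
          rw [hg]
          rw [show (extF (k+1) (fun S => sig n (k+1) (ω S) : SimplexForm n (k+1)))
              = fun T => sig n (k+1) (extF (k+1) ω T) from _root_.funext (ext_sig (k+1) (k+1) ω)]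
          exact Dt_sig k (extF (k+1) ω) (insert j S.1)
        rw [h1, ← ext_D (k+1) ω _ hcard, hω]
        have : extF (k+2) ((fun _ => 0) : SimplexForm n (k+2)) (insert j S.1) = 0 := by
          delta extF; split <;> rfl
        rw [this, sig_zero]
      rw [hDg, mul_zero, smul_zero]
    have hmaster := master g S.1
    rw [hItDt, add_zero] at hmaster
    rw [hmaster]
    have hgS : g S.1 = sig n (k+1) (ω S) := by
      rw [hg]; delta extF; simp only [dif_pos S.2]
    rw [hgS, S.2]
    have heuler := euler_sig (n := n) k (ω S)
    calc (k+1) • sig n (k+1) (ω S) + ∑ i, X i * pderiv i (sig n (k+1) (ω S))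
        = (∑ i, X i * pderiv i (sig n (k+1) (ω S))) + ((k+1 : ℕ) : ℚ) • sig n (k+1) (ω S) := by
          rw [Nat.cast_smul_eq_nsmul]
          exact add_comm _ _
      _ = ω S := heuler
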